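/- arXiv:math/0401228 — 4 statements merged into one kernel-verified Lean document; each statement's English description precedes it below -/
import Mathlib

section
/- Let p be an odd prime, and m, n positive integers with p not dividing m. Define K_p(r,m) = ∑_{0<k<p, m | k−rp} 1/k (a sum in ℤ/pℤ). Then B_{p-1}({pn/m}) − B_{p-1} ≡ m·∑_{r=1}^{n} K_p(r,m) ≡ −∑_{0<k≤⌊pn/m⌋, p∤k} 1/k (mod p). -/
/-!
Put `N = ⌊p n / m⌋`, so that `x = {p n / m} = p n / m - N` is `p`-integral and `x ≡ -N (mod p)`.
Only the constant term of `B_{p-1}(X)` has `p` in its denominator, so the reduction mod `p` of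
`B_{p-1}(x) - B_{p-1}` depends only on `x mod p`, and it equals that of
`B_{p-1}(-N) - B_{p-1} = (p - 1) ∑_{k ≤ N} k^{p-2}` (reflection and Faulhaber, `p - 1` being even),
which by Fermat is `-∑_{k ≤ N, p ∤ k} 1/k`.
For the middle term, `t m + k = r p` matches the pairs `(r, k)` with `0 < k < p`, `k ≡ r p (mod m)`,
`1 ≤ r ≤ n` bijectively with the `t ≤ N` prime to `p`, and then `m / k ≡ -1 / t (mod p)`.
-/

/-- `K_p(r, m) = ∑_{0<k<p, m ∣ k - r p} 1/k` computed in `ℤ/pℤ`. -/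
def Kp (p m : ℕ) (r : ℤ) : ZMod p :=
  ∑ k ∈ (Finset.Ioo 0 p).filter (fun k : ℕ => (m : ℤ) ∣ (k : ℤ) - r * p),
    ((k : ZMod p))⁻¹

open Finset
open scoped Polynomial

section PIntegral

variable (p : ℕ) [Fact p.Prime]

abbrev pIntegralRat : Subring ℚ := (Rat.padicValuation p).integer

variable {p}

theorem mem_pIntegralRat_iff {x : ℚ} : x ∈ pIntegralRat p ↔ ¬ p ∣ x.den :=
  Rat.padicValuation_le_one_iff

theorem natCast_den_ne_zero_of_mem_pIntegralRat {x : ℚ} (hx : x ∈ pIntegralRat p) :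
    (x.den : ZMod p) ≠ 0 :=
  (ZMod.natCast_eq_zero_iff _ _).not.mpr (mem_pIntegralRat_iff.mp hx)

theorem inv_natCast_mem_pIntegralRat {d : ℕ} (hd : ¬ p ∣ d) : (d : ℚ)⁻¹ ∈ pIntegralRat p := by
  rw [mem_pIntegralRat_iff, Rat.inv_natCast_den]
  split_ifs <;> simp_all

theorem natCast_div_natCast_mem_pIntegralRat (a : ℕ) {d : ℕ} (hd : ¬ p ∣ d) :
    (a : ℚ) / d ∈ pIntegralRat p :=
  div_eq_mul_inv (a : ℚ) d ▸ mul_mem (natCast_mem _ a) (inv_natCast_mem_pIntegralRat hd)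

variable (p) in
def pIntegralRat.toZMod : pIntegralRat p →+* ZMod p where
  toFun x := ((x : ℚ) : ZMod p)
  map_one' := by simp
  map_mul' x y := Rat.cast_mul_of_ne_zero (natCast_den_ne_zero_of_mem_pIntegralRat x.2)
    (natCast_den_ne_zero_of_mem_pIntegralRat y.2)
  map_zero' := by simp
  map_add' x y := Rat.cast_add_of_ne_zero (natCast_den_ne_zero_of_mem_pIntegralRat x.2)
    (natCast_den_ne_zero_of_mem_pIntegralRat y.2)

theorem cast_eval_eq_of_cast_eq {f : ℚ[X]} (hf : ∀ i, f.coeff i ∈ pIntegralRat p) {x y : ℚ}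
    (hx : x ∈ pIntegralRat p) (hy : y ∈ pIntegralRat p) (hxy : (x : ZMod p) = y) :
    ((f.eval x : ℚ) : ZMod p) = f.eval y := by
  have hcoeffs : (f.coeffs : Set ℚ) ⊆ pIntegralRat p := by
    intro c hc
    obtain ⟨i, -, rfl⟩ := Polynomial.mem_coeffs_iff.mp hc
    exact hf i
  set g := f.toSubring _ hcoeffs
  have hcast (z : pIntegralRat p) : ((f.eval (z : ℚ) : ℚ) : ZMod p) =
      g.eval₂ (pIntegralRat.toZMod p) (pIntegralRat.toZMod p z) := by
    conv_lhs => rw [← Polynomial.map_toSubring f _ hcoeffs, Polynomial.eval_map]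
    rw [show (z : ℚ) = (pIntegralRat p).subtype z from rfl, Polynomial.eval₂_at_apply]
    exact (Polynomial.eval₂_at_apply (p := g) (pIntegralRat.toZMod p) z).symm
  exact (hcast ⟨x, hx⟩).trans ((congrArg (g.eval₂ _) hxy).trans (hcast ⟨y, hy⟩).symm)

theorem bernoulli_mem_pIntegralRat {i : ℕ} (hi : i < p - 1) : bernoulli i ∈ pIntegralRat p := by
  induction i using Nat.strong_induction_on with
  | _ i ih =>
    rcases Nat.eq_zero_or_pos i with rfl | hi0
    · simp
    have hsum := sum_bernoulli (i + 1)
    rw [if_neg (by omega), sum_range_succ, Nat.choose_succ_self_right,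
      add_eq_zero_iff_neg_eq] at hsum
    have hB : bernoulli i =
        ((i + 1 : ℕ) : ℚ)⁻¹ * -∑ k ∈ range i, ((i + 1).choose k : ℚ) * bernoulli k := by
      rw [hsum, inv_mul_cancel_left₀ (by positivity)]
    rw [hB]
    refine mul_mem (inv_natCast_mem_pIntegralRat fun hdvd => ?_) (neg_mem (sum_mem fun k hk => ?_))
    · have := Nat.le_of_dvd (by omega) hdvd
      omega
    · have hk := mem_range.mp hk
      exact mul_mem (natCast_mem _ _) (ih k hk (by omega))

theorem coeff_bernoulli_sub_C_mem_pIntegralRat {n : ℕ} (hn : n ≤ p - 1) (i : ℕ) :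
    (Polynomial.bernoulli n - Polynomial.C (bernoulli n)).coeff i ∈ pIntegralRat p := by
  rw [Polynomial.coeff_sub, Polynomial.coeff_C, Polynomial.coeff_bernoulli]
  rcases Nat.eq_zero_or_pos i with rfl | hi
  · simp
  rw [if_neg hi.ne', sub_zero]
  split_ifs with hin
  · exact mul_mem (bernoulli_mem_pIntegralRat (by omega)) (natCast_mem _ _)
  · exact zero_mem _

end PIntegral

theorem bernoulli_eval_neg_natCast_sub {q : ℕ} (hq : Even (q + 1)) (N : ℕ) :
    (Polynomial.bernoulli (q + 1)).eval (-(N : ℚ)) - bernoulli (q + 1) =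
      ((q + 1) * ∑ k ∈ range (N + 1), k ^ q : ℕ) := by
  rw [Polynomial.bernoulli_eval_neg, hq.neg_one_pow, one_mul, Polynomial.bernoulli_succ_eval,
    sum_range_succ]
  push_cast
  ring

theorem ZMod.pow_sub_two_eq_inv {p : ℕ} [Fact p.Prime] (hp : p ≠ 2) (x : ZMod p) :
    x ^ (p - 2) = x⁻¹ := by
  have hp3 := (Fact.out : p.Prime).two_le
  rcases eq_or_ne x 0 with rfl | hx
  · rw [zero_pow (by omega), inv_zero]
  refine eq_inv_of_mul_eq_one_left ?_
  rw [← pow_succ, show p - 2 + 1 = p - 1 by omega, ZMod.pow_card_sub_one_eq_one hx]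

theorem ZMod.sum_range_pow_sub_two {p : ℕ} [Fact p.Prime] (hp : p ≠ 2) (N : ℕ) :
    ∑ k ∈ range (N + 1), (k : ZMod p) ^ (p - 2) =
      ∑ k ∈ (Icc 1 N).filter (fun k => ¬ p ∣ k), (k : ZMod p)⁻¹ := by
  simp only [ZMod.pow_sub_two_eq_inv hp]
  refine (sum_subset (fun k hk => ?_) fun k hk hk' => ?_).symm
  · simp only [mem_filter, mem_Icc] at hk
    exact mem_range.mpr (by omega)
  · simp only [mem_filter, mem_Icc, not_and, not_not, mem_range] at hk hk'
    have : (k : ZMod p) = 0 := by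
      rw [ZMod.natCast_eq_zero_iff]
      rcases Nat.eq_zero_or_pos k with rfl | hk0
      exacts [dvd_zero p, hk' ⟨hk0, by omega⟩]
    rw [this, inv_zero]

theorem Int.fract_natCast_div_natCast (a b : ℕ) :
    Int.fract ((a : ℚ) / b) = (a : ℚ) / b - (a / b : ℕ) := by
  rw [Int.fract, Rat.floor_natCast_div_natCast, ← Int.natCast_div, Int.cast_natCast]

section BernoulliCongruence

variable {p m : ℕ} [Fact p.Prime]

theorem fract_natCast_mul_div_mem_pIntegralRat (hpm : ¬ p ∣ m) (n : ℕ) :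
    Int.fract ((p * n : ℚ) / m) ∈ pIntegralRat p := by
  rw [← Nat.cast_mul, Int.fract_natCast_div_natCast]
  exact sub_mem (natCast_div_natCast_mem_pIntegralRat _ hpm) (natCast_mem _ _)

theorem cast_fract_natCast_mul_div (hpm : ¬ p ∣ m) (n : ℕ) :
    ((Int.fract ((p * n : ℚ) / m) : ℚ) : ZMod p) = ((-(p * n / m : ℕ) : ℚ) : ZMod p) := by
  rw [← Nat.cast_mul, Int.fract_natCast_div_natCast,
    Rat.cast_sub_of_ne_zero
      (natCast_den_ne_zero_of_mem_pIntegralRat (natCast_div_natCast_mem_pIntegralRat _ hpm))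
      (natCast_den_ne_zero_of_mem_pIntegralRat (natCast_mem _ _)),
    Rat.cast_div_of_ne_zero (by simp only [Rat.den_natCast, Nat.cast_one]; exact one_ne_zero)
      (by simpa [ZMod.natCast_eq_zero_iff] using hpm),
    Rat.cast_natCast, Nat.cast_mul, ZMod.natCast_self]
  simp

theorem cast_bernoulli_eval_fract_sub (hodd : Odd p) (hpm : ¬ p ∣ m) (n : ℕ) :
    (((Polynomial.bernoulli (p - 1)).eval (Int.fract ((p * n : ℚ) / m)) - bernoulli (p - 1) : ℚ)
        : ZMod p) =
      -∑ k ∈ (Icc 1 (p * n / m)).filter (fun k => ¬ p ∣ k), (k : ZMod p)⁻¹ := by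
  have hp2 : p ≠ 2 := by rintro rfl; exact Nat.not_odd_iff_even.mpr even_two hodd
  have hpq : p - 1 = p - 2 + 1 := by have := (Fact.out : p.Prime).two_le; omega
  have hcongr := cast_eval_eq_of_cast_eq (coeff_bernoulli_sub_C_mem_pIntegralRat le_rfl)
    (fract_natCast_mul_div_mem_pIntegralRat hpm n) (neg_mem (natCast_mem _ _))
    (cast_fract_natCast_mul_div hpm n)
  simp only [Polynomial.eval_sub, Polynomial.eval_C] at hcongr
  have hcoeff : ((p - 2 + 1 : ℕ) : ZMod p) = -1 := by
    rw [← hpq, Nat.cast_pred (Fact.out : p.Prime).pos, ZMod.natCast_self, zero_sub]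
  rw [hcongr, hpq, bernoulli_eval_neg_natCast_sub (hpq ▸ Nat.Odd.sub_odd hodd odd_one),
    Rat.cast_natCast, Nat.cast_mul, hcoeff, neg_one_mul, ← ZMod.sum_range_pow_sub_two hp2]
  push_cast
  rfl

end BernoulliCongruence

theorem Nat.add_sub_mod_eq_div_add_one_mul {p : ℕ} (hp : 0 < p) (a : ℕ) :
    a + (p - a % p) = (a / p + 1) * p := by
  have := Nat.div_add_mod a p
  have := Nat.mod_lt a hp
  rw [add_one_mul, mul_comm]
  omega

theorem Nat.div_add_one_eq_and_sub_mod_eq {p a k r : ℕ} (hk0 : 0 < k) (hkp : k < p)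
    (h : a + k = r * p) : a / p + 1 = r ∧ p - a % p = k := by
  obtain ⟨s, rfl⟩ : ∃ s, r = s + 1 := Nat.exists_eq_add_one.mpr (Nat.pos_of_ne_zero (by
    rintro rfl; omega))
  have := (Nat.div_mod_unique (show 0 < p by omega) (a := a) (d := s) (c := p - k)).mpr
    ⟨by rw [add_one_mul] at h; rw [mul_comm]; omega, by omega⟩
  omega

theorem Nat.intCast_dvd_sub_iff_exists_mul_add_eq {m k N : ℕ} (hk : k ≤ N) :
    (m : ℤ) ∣ k - N ↔ ∃ t, t * m + k = N := by
  rw [← Nat.modEq_iff_dvd, Nat.ModEq.comm, Nat.modEq_iff_dvd' hk]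
  constructor
  · rintro ⟨t, ht⟩
    exact ⟨t, by rw [mul_comm]; omega⟩
  · rintro ⟨t, rfl⟩
    exact ⟨t, by rw [mul_comm]; omega⟩

theorem mem_filter_intCast_dvd_sub_iff {p m r k : ℕ} (hr : 0 < r) :
    k ∈ (Ioo 0 p).filter (fun k : ℕ => (m : ℤ) ∣ (k : ℤ) - (r : ℤ) * p) ↔
      0 < k ∧ k < p ∧ ∃ t, t * m + k = r * p := by
  rw [mem_filter, mem_Ioo, and_assoc, and_congr_right fun hk0 => and_congr_right fun hkp => ?_]
  have hk : k ≤ r * p := by nlinarith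
  rw [← Nat.intCast_dvd_sub_iff_exists_mul_add_eq hk, Nat.cast_mul]

theorem natCast_mul_inv_eq_neg_inv {p m t k r : ℕ} [Fact p.Prime] (hpm : ¬ p ∣ m)
    (h : t * m + k = r * p) : (m : ZMod p) * (k : ZMod p)⁻¹ = -(t : ZMod p)⁻¹ := by
  have hm : (m : ZMod p) ≠ 0 := (ZMod.natCast_eq_zero_iff m p).not.mpr hpm
  have hk : (k : ZMod p) = -(t * m) := by
    have h' := congrArg (Nat.cast : ℕ → ZMod p) h
    push_cast [ZMod.natCast_self, mul_zero] at h'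
    linear_combination h'
  rw [hk, inv_neg, mul_inv, mul_neg, mul_comm (t : ZMod p)⁻¹, ← mul_assoc, mul_inv_cancel₀ hm,
    one_mul]

section Reindexing

variable {p m n : ℕ}

theorem sigma_mem_of_mem_filter_not_dvd [Fact p.Prime] (hpm : ¬ p ∣ m) {t : ℕ}
    (ht : t ∈ (Icc 1 (p * n / m)).filter (fun t => ¬ p ∣ t)) :
    (⟨t * m / p + 1, p - t * m % p⟩ : Σ _ : ℕ, ℕ) ∈
      (Icc 1 n).sigma fun r => (Ioo 0 p).filter fun k : ℕ => (m : ℤ) ∣ (k : ℤ) - (r : ℤ) * p := by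
  have hpp : p.Prime := Fact.out
  have hm : 0 < m := Nat.pos_of_ne_zero (by rintro rfl; exact hpm (dvd_zero p))
  simp only [mem_filter, mem_Icc, Nat.le_div_iff_mul_le hm] at ht
  obtain ⟨⟨-, htn⟩, htp⟩ := ht
  have hpt : ¬ p ∣ t * m := fun h => (hpp.dvd_mul.mp h).elim htp hpm
  have hmod : t * m % p ≠ 0 := fun h => hpt (Nat.dvd_of_mod_eq_zero h)
  have hmodlt := Nat.mod_lt (t * m) hpp.pos
  have hlt : t * m < n * p := mul_comm p n ▸ lt_of_le_of_ne htn fun h => hpt (h ▸ dvd_mul_right p n)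
  have hdiv := (Nat.div_lt_iff_lt_mul hpp.pos).mpr hlt
  simp only [mem_sigma, mem_Icc]
  exact ⟨⟨Nat.le_add_left 1 _, by omega⟩, (mem_filter_intCast_dvd_sub_iff (Nat.succ_pos _)).mpr
    ⟨by omega, by omega, t, Nat.add_sub_mod_eq_div_add_one_mul hpp.pos _⟩⟩

theorem mem_filter_not_dvd_of_mul_add_eq (hm : 0 < m) {r k t : ℕ} (hrn : r ≤ n) (hk0 : 0 < k)
    (hkp : k < p) (ht : t * m + k = r * p) :
    t ∈ (Icc 1 (p * n / m)).filter (fun t => ¬ p ∣ t) := by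
  have htp : ¬ p ∣ t := fun hdvd => by
    have hk := (Nat.dvd_add_right (hdvd.mul_right m)).mp (ht ▸ dvd_mul_left p r)
    have := Nat.le_of_dvd hk0 hk
    omega
  simp only [mem_filter, mem_Icc, Nat.le_div_iff_mul_le hm]
  exact ⟨⟨Nat.pos_of_ne_zero (by rintro rfl; exact htp (dvd_zero p)), by nlinarith⟩, htp⟩

theorem natCast_mul_sum_Kp [Fact p.Prime] (hpm : ¬ p ∣ m) (n : ℕ) :
    (m : ZMod p) * ∑ r ∈ Icc 1 n, Kp p m r =
      -∑ t ∈ (Icc 1 (p * n / m)).filter (fun t => ¬ p ∣ t), (t : ZMod p)⁻¹ := by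
  have hp : 0 < p := (Fact.out : p.Prime).pos
  have hm : 0 < m := Nat.pos_of_ne_zero (by rintro rfl; exact hpm (dvd_zero p))
  have hdecomp (t : ℕ) := Nat.add_sub_mod_eq_div_add_one_mul hp (t * m)
  simp only [Kp, mul_sum]
  rw [sum_sigma', ← sum_neg_distrib, eq_comm]
  refine sum_nbij (fun t => ⟨t * m / p + 1, p - t * m % p⟩)
    (fun t ht => sigma_mem_of_mem_filter_not_dvd hpm ht) (fun t₁ _ t₂ _ h => ?_) (fun x hx => ?_)
    (fun t _ => (natCast_mul_inv_eq_neg_inv hpm (hdecomp t)).symm)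
  · simp only [Sigma.mk.inj_iff, heq_eq_eq] at h
    have h₁ := hdecomp t₁
    rw [h.1, h.2, ← hdecomp t₂] at h₁
    exact Nat.eq_of_mul_eq_mul_right hm (by omega)
  · obtain ⟨r, k⟩ := x
    simp only [coe_sigma, Set.mem_sigma_iff, mem_coe, mem_Icc] at hx
    obtain ⟨⟨hr1, hrn⟩, hk⟩ := hx
    obtain ⟨hk0, hkp, t, ht⟩ := (mem_filter_intCast_dvd_sub_iff hr1).mp hk
    obtain ⟨hr, hk'⟩ := Nat.div_add_one_eq_and_sub_mod_eq hk0 hkp ht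
    exact ⟨t, mem_filter_not_dvd_of_mul_add_eq hm hrn hk0 hkp ht, by simp only [hr, hk']⟩

end Reindexing

theorem stmt_1_general (p m n : ℕ) [Fact p.Prime] (hodd : Odd p) (hpm : ¬ p ∣ m) :
    ((((Polynomial.bernoulli (p - 1)).eval (Int.fract ((p * n : ℚ) / m))
        - bernoulli (p - 1) : ℚ)) : ZMod p)
      = (m : ZMod p) * ∑ r ∈ Finset.Icc 1 n, Kp p m (r : ℤ)
    ∧ (m : ZMod p) * ∑ r ∈ Finset.Icc 1 n, Kp p m (r : ℤ)
      = - ∑ k ∈ (Finset.Icc 1 (p * n / m)).filter (fun k => ¬ p ∣ k),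
            ((k : ZMod p))⁻¹ := by
  rw [natCast_mul_sum_Kp hpm n]
  exact ⟨cast_bernoulli_eval_fract_sub hodd hpm n, rfl⟩

theorem stmt_1 (p m n : ℕ) [Fact p.Prime] (hodd : Odd p) (hm : 0 < m)
    (hn : 0 < n) (hpm : ¬ p ∣ m) :
    ((((Polynomial.bernoulli (p - 1)).eval (Int.fract ((p * n : ℚ) / m))
        - bernoulli (p - 1) : ℚ)) : ZMod p)
      = (m : ZMod p) * ∑ r ∈ Finset.Icc 1 n, Kp p m (r : ℤ)
    ∧ (m : ZMod p) * ∑ r ∈ Finset.Icc 1 n, Kp p m (r : ℤ)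
      = - ∑ k ∈ (Finset.Icc 1 (p * n / m)).filter (fun k => ¬ p ∣ k),
            ((k : ZMod p))⁻¹ :=
  stmt_1_general p m n hodd hpm
end

section
/- Let p be an odd prime and m a positive integer not divisible by p. Then ∑_{r=1}^{m} r·K_p(r,m) ≡ −q_p(m) (mod p), where K_p(r,m) = ∑_{0<k<p, m | k−rp} 1/k in ℤ/pℤ and q_p(m) = (m^{p−1} − 1)/p is the Fermat quotient. -/
open Finset

theorem Nat.bijOn_mul_mod_Ioo {a n : ℕ} (ha : a.Coprime n) :
    Set.BijOn (fun t => a * t % n) (Set.Ioo 0 n) (Set.Ioo 0 n) := by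
  have hmaps : Set.MapsTo (fun t => a * t % n) (Set.Ioo 0 n) (Set.Ioo 0 n) := by
    rintro t ⟨ht0, htn⟩
    refine ⟨Nat.pos_of_ne_zero fun h => ?_, Nat.mod_lt _ (ht0.trans htn)⟩
    exact Nat.not_dvd_of_pos_of_lt ht0 htn
      ((Nat.Coprime.symm ha).dvd_of_dvd_mul_left (Nat.dvd_of_mod_eq_zero h))
  refine (Set.finite_Ioo 0 n).injOn_iff_bijOn_of_mapsTo hmaps |>.mp ?_
  rintro t₁ ⟨-, ht₁⟩ t₂ ⟨-, ht₂⟩ h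
  have := Nat.ModEq.cancel_left_of_coprime (Nat.Coprime.symm ha).gcd_eq_one h
  rwa [Nat.ModEq, Nat.mod_eq_of_lt ht₁, Nat.mod_eq_of_lt ht₂] at this

theorem Nat.div_add_one_eq_and_sub_mod_eq_iff {a n r k : ℕ} (hk : 0 < k) (hkn : k < n)
    (hr : r ≠ 0) : a / n + 1 = r ∧ n - a % n = k ↔ r * n = k + a := by
  obtain ⟨s, rfl⟩ := Nat.exists_eq_add_one_of_ne_zero hr
  have hmod := Nat.mod_lt a (hk.trans hkn)
  have := Nat.div_mod_unique (a := a) (d := s) (c := n - k) (hk.trans hkn)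
  rw [Nat.mul_comm] at this
  rw [add_one_mul]
  omega

theorem Nat.div_add_one_mul_eq {a n : ℕ} (h : a % n ∈ Set.Ioo 0 n) :
    (a / n + 1) * n = (n - a % n) + a :=
  (div_add_one_eq_and_sub_mod_eq_iff (Nat.sub_pos_of_lt h.2) (Nat.sub_lt (h.1.trans h.2) h.1)
    (Nat.succ_ne_zero _)).mp ⟨rfl, rfl⟩

section DvdSubMulPairs

variable {m n : ℕ}

def dvdSubMulPairs (m n : ℕ) : Finset (ℕ × ℕ) :=
  (Icc 1 m ×ˢ Ioo 0 n).filter fun x => (m : ℤ) ∣ (x.2 : ℤ) - (x.1 : ℤ) * n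

theorem mem_dvdSubMulPairs (hm : 0 < m) (hmn : m.Coprime n) {t : ℕ} (ht : t ∈ Ioo 0 n) :
    (m * t / n + 1, n - m * t % n) ∈ dvdSubMulPairs m n := by
  obtain ⟨ht0, htn⟩ := mem_Ioo.mp ht
  have hs : m * t % n ∈ Set.Ioo 0 n := (Nat.bijOn_mul_mod_Ioo hmn).mapsTo ⟨ht0, htn⟩
  have hlt : m * t / n < m := Nat.div_lt_of_lt_mul (by rw [mul_comm n]; gcongr)
  simp only [dvdSubMulPairs, mem_filter, mem_product, mem_Icc, mem_Ioo]
  refine ⟨⟨⟨Nat.le_add_left 1 _, hlt⟩, Nat.sub_pos_of_lt hs.2,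
    Nat.sub_lt (hs.1.trans hs.2) hs.1⟩, -t, ?_⟩
  have := congrArg (Nat.cast : ℕ → ℤ) (Nat.div_add_one_mul_eq hs)
  push_cast at this ⊢
  linarith

theorem exists_eq_of_mem_dvdSubMulPairs {x : ℕ × ℕ} (hx : x ∈ dvdSubMulPairs m n) :
    ∃ t ∈ Ioo 0 n, x.1 * n - x.2 = m * t ∧ (m * t / n + 1, n - m * t % n) = x := by
  obtain ⟨r, k⟩ := x
  simp only [dvdSubMulPairs, mem_filter, mem_product, mem_Icc, mem_Ioo] at hx
  obtain ⟨⟨⟨hr1, hrm⟩, hk0, hkn⟩, hdvd⟩ := hx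
  have hnr : n ≤ r * n := Nat.le_mul_of_pos_left n hr1
  have hrn : r * n ≤ m * n := Nat.mul_le_mul_right n hrm
  obtain ⟨t, ht⟩ : m ∣ r * n - k := by
    rw [← Int.natCast_dvd_natCast, Nat.cast_sub (by omega), ← dvd_neg]
    simpa using hdvd
  have ht0 : 0 < t := Nat.pos_of_ne_zero (by rintro rfl; rw [mul_zero] at ht; omega)
  have htn : t < n := Nat.lt_of_mul_lt_mul_left (a := m) (by omega)
  obtain ⟨hr, hk⟩ := (Nat.div_add_one_eq_and_sub_mod_eq_iff hk0 hkn (by omega)).mpr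
    (by omega : r * n = k + m * t)
  exact ⟨t, mem_Ioo.mpr ⟨ht0, htn⟩, ht, by rw [hr, hk]⟩

/-- The solutions `(r, k)` of `m ∣ k - r n` are parametrised by `t = (r n - k) / m`. -/
theorem sum_Icc_sum_filter_dvd_sub_mul {M : Type*} [AddCommMonoid M] (hm : 0 < m)
    (hmn : m.Coprime n) (f : ℕ → ℕ → M) :
    ∑ r ∈ Icc 1 m,
        ∑ k ∈ (Ioo 0 n).filter (fun k : ℕ => (m : ℤ) ∣ (k : ℤ) - (r : ℤ) * n), f r k
      = ∑ t ∈ Ioo 0 n, f (m * t / n + 1) (n - m * t % n) := by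
  rw [← sum_finset_product (dvdSubMulPairs m n) _ _ (by simp [dvdSubMulPairs, and_assoc])
    (f := fun x => f x.1 x.2)]
  refine (sum_nbij' (fun t => (m * t / n + 1, n - m * t % n)) (fun x => (x.1 * n - x.2) / m)
    (fun t ht => mem_dvdSubMulPairs hm hmn ht) (fun x hx => ?_) (fun t ht => ?_) (fun x hx => ?_)
    fun _ _ => rfl).symm
  · obtain ⟨t, ht, hmt, -⟩ := exists_eq_of_mem_dvdSubMulPairs hx
    rwa [hmt, Nat.mul_div_cancel_left _ hm]
  · have hs := (Nat.bijOn_mul_mod_Ioo hmn).mapsTo (mem_Ioo.mp ht)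
    dsimp only
    rw [Nat.div_add_one_mul_eq hs, Nat.add_sub_cancel_left, Nat.mul_div_cancel_left _ hm]
  · obtain ⟨t, -, hmt, hx⟩ := exists_eq_of_mem_dvdSubMulPairs hx
    rwa [hmt, Nat.mul_div_cancel_left _ hm]

end DvdSubMulPairs

theorem ZMod.sum_Ioo_inv_eq_zero {p : ℕ} [Fact p.Prime] (hp : Odd p) :
    ∑ t ∈ Ioo 0 p, (t : ZMod p)⁻¹ = 0 := by
  have hchar : ringChar (ZMod p) ≠ 2 := by
    rw [ZMod.ringChar_zmod_n]; rintro rfl; exact absurd hp (by decide)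
  refine (Ring.eq_self_iff_eq_zero_of_char_ne_two hchar).mp ?_
  rw [← sum_neg_distrib]
  refine sum_nbij' (p - ·) (p - ·) ?_ ?_ ?_ ?_ fun t ht => ?_
  any_goals intro t ht; simp only [mem_Ioo] at ht ⊢; omega
  rw [Nat.cast_sub (mem_Ioo.mp ht).2.le, ZMod.natCast_self, zero_sub, inv_neg]

theorem Finset.prod_one_add_mul_of_mul_self_eq_zero {ι R : Type*} [CommRing R] {ε : R}
    (hε : ε * ε = 0) (s : Finset ι) (x : ι → R) :
    ∏ i ∈ s, (1 + ε * x i) = 1 + ε * ∑ i ∈ s, x i := by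
  classical
  induction s using Finset.induction_on with
  | empty => simp
  | insert a s ha ih =>
    rw [prod_insert ha, sum_insert ha, ih]
    linear_combination (x a * ∑ i ∈ s, x i) * hε

theorem ZMod.castHom_eq_of_natCast_mul_eq {p : ℕ} (hp : p ≠ 0) {a b : ZMod (p ^ 2)}
    (h : (p : ZMod (p ^ 2)) * a = (p : ZMod (p ^ 2)) * b) :
    ZMod.castHom (dvd_pow_self p two_ne_zero) (ZMod p) a =
      ZMod.castHom (dvd_pow_self p two_ne_zero) (ZMod p) b := by
  obtain ⟨a, rfl⟩ := ZMod.intCast_surjective a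
  obtain ⟨b, rfl⟩ := ZMod.intCast_surjective b
  have h' : (((p * a : ℤ)) : ZMod (p ^ 2)) = ((p * b : ℤ) : ZMod (p ^ 2)) := by
    push_cast; exact h
  rw [ZMod.intCast_eq_intCast_iff_dvd_sub, Nat.cast_pow, pow_two, ← mul_sub] at h'
  rw [map_intCast, map_intCast, ZMod.intCast_eq_intCast_iff_dvd_sub]
  exact (mul_dvd_mul_iff_left (by exact_mod_cast hp)).mp h'

section FermatQuotient

variable {p m : ℕ} [Fact p.Prime]

theorem ZMod.isUnit_natCast_mul_mod (hpm : ¬ p ∣ m) {t : ℕ} (ht : t ∈ Ioo 0 p) :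
    IsUnit ((m * t % p : ℕ) : ZMod (p ^ 2)) := by
  have hp : p.Prime := Fact.out
  obtain ⟨h0, hlt⟩ : m * t % p ∈ Set.Ioo 0 p :=
    (Nat.bijOn_mul_mod_Ioo ((hp.coprime_iff_not_dvd.mpr hpm).symm)).mapsTo (mem_Ioo.mp ht)
  refine (ZMod.isUnit_iff_coprime _ _).mpr (Nat.Coprime.pow_right 2 ?_)
  exact (hp.coprime_iff_not_dvd.mpr (Nat.not_dvd_of_pos_of_lt h0 hlt)).symm

theorem ZMod.natCast_pow_sub_one_eq_one_add_mul_sum (hpm : ¬ p ∣ m) :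
    (m : ZMod (p ^ 2)) ^ (p - 1) = 1 + (p : ZMod (p ^ 2)) * ∑ t ∈ Ioo 0 p,
      ((m * t / p : ℕ) : ZMod (p ^ 2)) * ((m * t % p : ℕ) : ZMod (p ^ 2))⁻¹ := by
  have hp : p.Prime := Fact.out
  have hbij := Nat.bijOn_mul_mod_Ioo ((hp.coprime_iff_not_dvd.mpr hpm).symm)
  rw [← coe_Ioo] at hbij
  set ε : ZMod (p ^ 2) := (p : ZMod (p ^ 2))
  have hε : ε * ε = 0 := by rw [← sq, ← Nat.cast_pow, ZMod.natCast_self]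
  set u : ℕ → ZMod (p ^ 2) := fun t => ((m * t % p : ℕ) : ZMod (p ^ 2))
  have hfactor : ∀ t ∈ Ioo 0 p, ((m * t : ℕ) : ZMod (p ^ 2)) =
      u t * (1 + ε * (((m * t / p : ℕ) : ZMod (p ^ 2)) * (u t)⁻¹)) := by
    intro t ht
    have hdecomp := congrArg (Nat.cast : ℕ → ZMod (p ^ 2)) (Nat.mod_add_div (m * t) p)
    rw [Nat.cast_add, Nat.cast_mul p] at hdecomp
    linear_combination -hdecomp - ε * ((m * t / p : ℕ) : ZMod (p ^ 2)) *
      ZMod.mul_inv_of_unit _ (ZMod.isUnit_natCast_mul_mod hpm ht)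
  have hperm : ∏ t ∈ Ioo 0 p, u t = ∏ t ∈ Ioo 0 p, (t : ZMod (p ^ 2)) :=
    prod_nbij _ (fun _ ht => hbij.mapsTo ht) hbij.injOn hbij.surjOn fun _ _ => rfl
  have hunit : IsUnit (∏ t ∈ Ioo 0 p, (t : ZMod (p ^ 2))) :=
    hperm ▸ IsUnit.prod_iff.mpr fun t ht => ZMod.isUnit_natCast_mul_mod hpm ht
  refine hunit.mul_left_cancel ?_
  calc (∏ t ∈ Ioo 0 p, (t : ZMod (p ^ 2))) * (m : ZMod (p ^ 2)) ^ (p - 1)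
      = ∏ t ∈ Ioo 0 p, ((m * t : ℕ) : ZMod (p ^ 2)) := by
        push_cast
        rw [prod_mul_distrib, prod_const, Nat.card_Ioo, Nat.sub_zero, mul_comm]
    _ = (∏ t ∈ Ioo 0 p, u t) *
          (1 + ε * ∑ t ∈ Ioo 0 p, ((m * t / p : ℕ) : ZMod (p ^ 2)) * (u t)⁻¹) := by
        rw [prod_congr rfl hfactor, prod_mul_distrib, prod_one_add_mul_of_mul_self_eq_zero hε]
    _ = _ := by rw [hperm]

theorem intCast_fermatQuotient_eq_sum (hpm : ¬ p ∣ m) :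
    ((((m : ℤ) ^ (p - 1) - 1) / p : ℤ) : ZMod p) =
      ∑ t ∈ Ioo 0 p, ((m * t / p : ℕ) : ZMod p) * ((m * t : ℕ) : ZMod p)⁻¹ := by
  have hp : p.Prime := Fact.out
  have hmq : (m : ZMod (p ^ 2)) ^ (p - 1) = 1 + p * (((m : ℤ) ^ (p - 1) - 1) / p : ℤ) := by
    have hdvd : (p : ℤ) ∣ (m : ℤ) ^ (p - 1) - 1 := Int.prime_dvd_pow_sub_one hp
      (Int.isCoprime_iff_gcd_eq_one.mpr ((hp.coprime_iff_not_dvd.mpr hpm).symm))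
    have h := congrArg (Int.cast : ℤ → ZMod (p ^ 2)) (Int.mul_ediv_cancel' hdvd)
    push_cast at h
    linear_combination -h
  have hq := ZMod.castHom_eq_of_natCast_mul_eq hp.ne_zero
    (add_left_cancel (hmq.symm.trans (ZMod.natCast_pow_sub_one_eq_one_add_mul_sum hpm)))
  rw [map_intCast] at hq
  rw [hq, map_sum]
  refine sum_congr rfl fun t ht => ?_
  rw [map_mul, map_natCast]
  congr 1
  refine eq_inv_of_mul_eq_one_right ?_
  rw [← ZMod.natCast_mod (m * t) p, ← map_natCast (ZMod.castHom (dvd_pow_self p two_ne_zero) _),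
    ← map_mul, ZMod.mul_inv_of_unit _ (ZMod.isUnit_natCast_mul_mod hpm ht), map_one]

end FermatQuotient

theorem stmt_3 (p m : ℕ) (hp : p.Prime) (hodd : Odd p) (hm : 0 < m)
    (hpm : ¬ p ∣ m) :
    ∑ r ∈ Finset.Icc 1 m, (r : ZMod p) * Kp p m (r : ℤ)
      = - (((((m : ℤ) ^ (p - 1) - 1) / (p : ℤ)) : ℤ) : ZMod p) := by
  have : Fact p.Prime := ⟨hp⟩
  have hterm : ∀ t ∈ Ioo 0 p,
      ((m * t / p + 1 : ℕ) : ZMod p) * ((p - m * t % p : ℕ) : ZMod p)⁻¹ =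
        -(((m * t / p : ℕ) : ZMod p) * ((m * t : ℕ) : ZMod p)⁻¹) -
          (m : ZMod p)⁻¹ * (t : ZMod p)⁻¹ := by
    intro t _
    rw [Nat.cast_sub (Nat.mod_lt _ hp.pos).le, ZMod.natCast_self, ZMod.natCast_mod, zero_sub,
      inv_neg]
    push_cast
    ring
  calc ∑ r ∈ Icc 1 m, (r : ZMod p) * Kp p m r
      = ∑ r ∈ Icc 1 m,
          ∑ k ∈ (Ioo 0 p).filter (fun k : ℕ => (m : ℤ) ∣ (k : ℤ) - (r : ℤ) * p),
            (r : ZMod p) * (k : ZMod p)⁻¹ := by simp only [Kp, mul_sum]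
    _ = ∑ t ∈ Ioo 0 p,
          ((m * t / p + 1 : ℕ) : ZMod p) * ((p - m * t % p : ℕ) : ZMod p)⁻¹ :=
        sum_Icc_sum_filter_dvd_sub_mul hm ((hp.coprime_iff_not_dvd.mpr hpm).symm) _
    _ = -∑ t ∈ Ioo 0 p, ((m * t / p : ℕ) : ZMod p) * ((m * t : ℕ) : ZMod p)⁻¹
          - (m : ZMod p)⁻¹ * ∑ t ∈ Ioo 0 p, (t : ZMod p)⁻¹ := by
        rw [sum_congr rfl hterm, sum_sub_distrib, sum_neg_distrib, mul_sum]
    _ = _ := by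
        rw [ZMod.sum_Ioo_inv_eq_zero hodd, intCast_fermatQuotient_eq_sum hpm, mul_zero, sub_zero]
end

section
/- Let p be an odd prime and k an integer with 0 ≤ k ≤ p−1. Then (−1)^k · C(p−1, k) ≡ 1 − p·H_k (mod p²), where H_k = ∑_{j=1}^{k} 1/j is interpreted via inverses modulo p² of integers j prime to p (all 1 ≤ j ≤ k < p are prime to p). -/
/-!
Since `k! · C(p-1, k) = ∏_{j=1}^k (p - j)`, we get `(-1)^k C(p-1, k) = ∏_{j=1}^k (1 - p/j)` in
`ZMod (p²)`, where every `j ≤ k < p` is invertible. As `p² = 0` there, expanding the product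
keeps only the terms linear in `p`, which gives `1 - p H_k`.
-/

open Finset

theorem Finset.prod_one_sub_mul_of_mul_self_eq_zero {ι R : Type*} [CommRing R] (s : Finset ι)
    (a : ι → R) {x : R} (hx : x * x = 0) :
    ∏ i ∈ s, (1 - x * a i) = 1 - x * ∑ i ∈ s, a i := by
  classical
  induction s using Finset.induction_on with
  | empty => simp
  | insert i s hi ih =>
    rw [prod_insert hi, sum_insert hi, ih]
    linear_combination a i * (∑ j ∈ s, a j) * hx

theorem Nat.cast_choose_succ_mul {R : Type*} [CommRing R] (n k : ℕ) :
    (n.choose (k + 1) : R) * (k + 1) = n.choose k * (n - k) := by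
  rcases le_or_gt k n with hkn | hnk
  · exact_mod_cast congrArg (Nat.cast : ℕ → R) (Nat.choose_succ_right_eq n k)
  · simp [Nat.choose_eq_zero_of_lt hnk, Nat.choose_eq_zero_of_lt (hnk.trans k.lt_succ_self)]

theorem ZMod.neg_one_pow_mul_choose_eq_prod {N : ℕ} (n k : ℕ)
    (hunit : ∀ j ∈ Icc 1 k, IsUnit (j : ZMod N)) :
    (-1 : ZMod N) ^ k * n.choose k = ∏ j ∈ Icc 1 k, (1 - (n + 1) * (j : ZMod N)⁻¹) := by
  induction k with
  | zero => simp
  | succ k ih =>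
    have hk : IsUnit ((k + 1 : ℕ) : ZMod N) := hunit (k + 1) (by simp)
    rw [prod_Icc_succ_top (by omega), ← ih fun j hj => hunit j (by simp only [mem_Icc] at hj ⊢; omega)]
    apply hk.mul_right_cancel
    have hinv := ZMod.mul_inv_of_unit _ hk
    push_cast at hinv ⊢
    linear_combination (-1 : ZMod N) ^ (k + 1) * Nat.cast_choose_succ_mul (R := ZMod N) n k
      + (-1 : ZMod N) ^ k * n.choose k * (n + 1) * hinv

theorem stmt_6_general (p k : ℕ) (hp : p.Prime) (hk : k ≤ p - 1) :
    ((-1 : ZMod (p ^ 2)) ^ k) * (Nat.choose (p - 1) k : ZMod (p ^ 2))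
      = 1 - (p : ZMod (p ^ 2)) * ∑ j ∈ Finset.Icc 1 k, ((j : ZMod (p ^ 2)))⁻¹ := by
  have hunit : ∀ j ∈ Icc 1 k, IsUnit (j : ZMod (p ^ 2)) := fun j hj => by
    rw [mem_Icc] at hj
    exact (ZMod.isUnit_natCast_iff_not_dvd_pow hp two_pos).2
      (Nat.not_dvd_of_pos_of_lt hj.1 (by omega))
  have hp_sq : (p : ZMod (p ^ 2)) * p = 0 := by
    rw [← sq]; exact_mod_cast ZMod.natCast_self (p ^ 2)
  have hp_cast : ((p - 1 : ℕ) : ZMod (p ^ 2)) + 1 = p := by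
    rw [Nat.cast_sub hp.one_le]; ring
  rw [ZMod.neg_one_pow_mul_choose_eq_prod _ _ hunit, hp_cast,
    prod_one_sub_mul_of_mul_self_eq_zero _ _ hp_sq]

theorem stmt_6 (p k : ℕ) (hp : p.Prime) (hodd : Odd p) (hk : k ≤ p - 1) :
    ((-1 : ZMod (p ^ 2)) ^ k) * (Nat.choose (p - 1) k : ZMod (p ^ 2))
      = 1 - (p : ZMod (p ^ 2)) * ∑ j ∈ Finset.Icc 1 k, ((j : ZMod (p ^ 2)))⁻¹ :=
  stmt_6_general p k hp hk
end

section
/- Let p be an odd prime and a an integer not divisible by p. Then a^p − a ≡ 2a·(a/p)·(a^{(p−1)/2} − (a/p)) (mod p²), where (a/p) ∈ {1, −1} is the Legendre symbol. -/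
theorem stmt_7 (p : ℕ) (hp : p.Prime) (hodd : Odd p) (a : ℤ) (ha : ¬ (p : ℤ) ∣ a) :
    a ^ p - a ≡ 2 * a * (@legendreSym p ⟨hp⟩ a)
        * (a ^ ((p - 1) / 2) - @legendreSym p ⟨hp⟩ a) [ZMOD (p : ℤ) ^ 2] := by
  haveI : Fact p.Prime := ⟨hp⟩
  set ε : ℤ := legendreSym p a with hε
  have hp1 : p = 2 * ((p - 1) / 2) + 1 := by
    obtain ⟨k, hk⟩ := hodd; omega
  have hε2 : ε ^ 2 = 1 := by
    have := legendreSym.sq_one p (a := a) (by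
      rwa [Ne, ZMod.intCast_zmod_eq_zero_iff_dvd])
    simpa [hε, sq] using this
  -- Euler's criterion
  have heuler : (p : ℤ) ∣ a ^ ((p - 1) / 2) - ε := by
    have h := legendreSym.eq_pow p a
    have h2 : ((a ^ ((p - 1) / 2) - ε : ℤ) : ZMod p) = 0 := by
      push_cast
      rw [hε, h]
      have : p / 2 = (p - 1) / 2 := by omega
      rw [this, sub_self]
    exact (ZMod.intCast_zmod_eq_zero_iff_dvd _ p).mp h2
  obtain ⟨c, hc⟩ := heuler
  have key : a ^ p - a - 2 * a * ε * (a ^ ((p - 1) / 2) - ε)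
      = (p : ℤ) ^ 2 * (a * c ^ 2) := by
    have hap : a ^ p = a * (a ^ ((p - 1) / 2)) ^ 2 := by
      conv_lhs => rw [hp1]
      ring
    have hx : a ^ ((p - 1) / 2) = ε + p * c := by linarith [hc]
    rw [hap, hx]
    linear_combination a * hε2
  exact Int.modEq_iff_dvd.mpr ⟨-(a * c ^ 2), by linarith [key]⟩
end
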